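/- arXiv:2108.12906 — 6 statements merged into one kernel-verified Lean document; each statement's English description precedes it below -/
import Mathlib

section
/- If h is a trivial autohomeomorphism of ℕ* = βℕ \ ℕ, i.e. h is the restriction to ℕ* of βb for some bijection b : A → B between cofinite subsets A, B of ℕ, then the fixed-point set {p ∈ ℕ* : h(p) = p} is clopen in ℕ*. -/
/-- `ℕ* = βℕ \ ℕ`, modeled as the space of nonprincipal (free) ultrafilters on `ℕ`,
a subspace of the Stone space `Ultrafilter ℕ = βℕ`. -/
def NStar : Type := {p : Ultrafilter ℕ // ∀ n : ℕ, p ≠ pure n}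

instance : TopologicalSpace NStar :=
  instTopologicalSpaceSubtype (p := fun p : Ultrafilter ℕ => ∀ n : ℕ, p ≠ pure n)

open scoped Classical in
/-- Greedy 3-coloring of `ℕ` adapted to a function `f` and a set `D`. -/
noncomputable def col (f : ℕ → ℕ) (D : Set ℕ) : ℕ → Fin 3
  | n =>
    let prev : Finset (Fin 3) :=
      ((Finset.range n).attach.filter
        (fun m => m.1 ∈ D ∧ (f m.1 = n ∨ f n = m.1))).image
        (fun m => col f D m.1)
    if h : (Finset.univ \ prev).Nonempty then h.choose else 0
  termination_by n => n
  decreasing_by exact Finset.mem_range.mp m.2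

open scoped Classical in
lemma col_notmem_prev (f : ℕ → ℕ) (D : Set ℕ) (hinj : Set.InjOn f D) (n : ℕ) :
    col f D n ∉
      ((Finset.range n).attach.filter
        (fun m => m.1 ∈ D ∧ (f m.1 = n ∨ f n = m.1))).image
        (fun m => col f D m.1) := by
  set s := (Finset.range n).attach.filter
      (fun m => m.1 ∈ D ∧ (f m.1 = n ∨ f n = m.1)) with hs
  set prev := s.image (fun m => col f D m.1) with hprev
  have hcard : s.card ≤ 2 := by
    have hsub : s ⊆ s.filter (fun m => f m.1 = n) ∪ s.filter (fun m => f n = m.1) := by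
      intro m hm
      rcases (Finset.mem_filter.mp hm).2.2 with h1 | h1
      · exact Finset.mem_union_left _ (Finset.mem_filter.mpr ⟨hm, h1⟩)
      · exact Finset.mem_union_right _ (Finset.mem_filter.mpr ⟨hm, h1⟩)
    have h1 : (s.filter (fun m => f m.1 = n)).card ≤ 1 := by
      apply Finset.card_le_one.mpr
      intro a ha b hb
      have ha' := Finset.mem_filter.mp ha
      have hb' := Finset.mem_filter.mp hb
      have haD := (Finset.mem_filter.mp ha'.1).2.1
      have hbD := (Finset.mem_filter.mp hb'.1).2.1
      exact Subtype.ext (hinj haD hbD (ha'.2.trans hb'.2.symm))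
    have h2 : (s.filter (fun m => f n = m.1)).card ≤ 1 := by
      apply Finset.card_le_one.mpr
      intro a ha b hb
      have ha' := (Finset.mem_filter.mp ha).2
      have hb' := (Finset.mem_filter.mp hb).2
      exact Subtype.ext (ha'.symm.trans hb')
    calc s.card ≤ (s.filter (fun m => f m.1 = n) ∪ s.filter (fun m => f n = m.1)).card :=
          Finset.card_le_card hsub
      _ ≤ _ := Finset.card_union_le _ _
      _ ≤ 2 := by omega
  have hprevcard : prev.card ≤ 2 := le_trans (Finset.card_image_le) hcard
  have hne : ((Finset.univ : Finset (Fin 3)) \ prev).Nonempty := by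
    rw [← Finset.card_pos, Finset.card_sdiff_of_subset (Finset.subset_univ _)]
    simp only [Finset.card_univ, Fintype.card_fin]
    omega
  have : col f D n = hne.choose := by
    rw [col]
    simp only [← hs, ← hprev]
    rw [dif_pos hne]
  rw [this]
  have := hne.choose_spec
  rw [Finset.mem_sdiff] at this
  exact this.2

lemma col_key (f : ℕ → ℕ) (D : Set ℕ) (hinj : Set.InjOn f D)
    (hfix : ∀ m ∈ D, f m ≠ m) {n : ℕ} (hn : n ∈ D) (hfn : f n ∈ D) :
    col f D (f n) ≠ col f D n := by
  classical
  rcases lt_trichotomy (f n) n with hlt | heq | hlt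
  · intro hc
    apply col_notmem_prev f D hinj n
    rw [← hc]
    apply Finset.mem_image.mpr
    exact ⟨⟨f n, Finset.mem_range.mpr hlt⟩,
      Finset.mem_filter.mpr ⟨Finset.mem_attach _ _, hfn, Or.inr rfl⟩, rfl⟩
  · exact absurd heq (hfix n hn)
  · intro hc
    apply col_notmem_prev f D hinj (f n)
    rw [hc]
    apply Finset.mem_image.mpr
    exact ⟨⟨n, Finset.mem_range.mpr hlt⟩,
      Finset.mem_filter.mpr ⟨Finset.mem_attach _ _, hn, Or.inl rfl⟩, rfl⟩

/-- If `h` is a trivial autohomeomorphism of `ℕ*`, i.e. induced by a bijection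
`b : A → B` between cofinite subsets `A, B ⊆ ℕ` (acting on ultrafilters by
`p ↦ b(p) = Ultrafilter.map b p`), then its fixed-point set is clopen in `ℕ*`. -/
theorem stmt2 (h : NStar ≃ₜ NStar) (A B : Set ℕ) (hA : Aᶜ.Finite) (hB : Bᶜ.Finite)
    (b : ℕ → ℕ) (hb : Set.BijOn b A B)
    (hhb : ∀ p : NStar, (h p).1 = Ultrafilter.map b p.1) :
    IsClopen {p : NStar | h p = p} := by
  classical
  set F : Set ℕ := {n | n ∈ A ∧ b n = n} with hF
  -- every free ultrafilter contains A
  have hAmem : ∀ p : NStar, A ∈ p.1 := by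
    intro p
    by_contra hc
    have : Aᶜ ∈ p.1 := (Ultrafilter.compl_mem_iff_notMem.mpr hc)
    obtain ⟨x, _, hx⟩ := Ultrafilter.eq_pure_of_finite_mem hA this
    exact p.2 x hx
  have key : {p : NStar | h p = p} = {p : NStar | F ∈ p.1} := by
    ext p
    simp only [Set.mem_setOf_eq]
    constructor
    · intro hp
      by_contra hc
      have hFc : Fᶜ ∈ p.1 := Ultrafilter.compl_mem_iff_notMem.mpr hc
      set D : Set ℕ := A ∩ Fᶜ with hD
      have hDmem : D ∈ p.1 := Filter.inter_mem (hAmem p) hFc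
      have hDinj : Set.InjOn b D := hb.injOn.mono (Set.inter_subset_left)
      have hDfix : ∀ m ∈ D, b m ≠ m := by
        intro m hm hbm
        exact hm.2 ⟨hm.1, hbm⟩
      set c := col b D with hc'
      have hone : ∃ i : Fin 3, {n | n ∈ D ∧ c n = i} ∈ p.1 := by
        by_contra hno
        push_neg at hno
        have h0 := Ultrafilter.compl_mem_iff_notMem.mpr (hno 0)
        have h1 := Ultrafilter.compl_mem_iff_notMem.mpr (hno 1)
        have h2 := Ultrafilter.compl_mem_iff_notMem.mpr (hno 2)
        have : D ∩ ({n | n ∈ D ∧ c n = 0}ᶜ ∩ ({n | n ∈ D ∧ c n = 1}ᶜ ∩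
            {n | n ∈ D ∧ c n = 2}ᶜ)) ∈ p.1 :=
          Filter.inter_mem hDmem (Filter.inter_mem h0 (Filter.inter_mem h1 h2))
        obtain ⟨n, hn⟩ := Ultrafilter.nonempty_of_mem this
        obtain ⟨hnD, hn0, hn1, hn2⟩ := hn
        simp only [Set.mem_compl_iff, Set.mem_setOf_eq, not_and] at hn0 hn1 hn2
        have := hn0 hnD; have := hn1 hnD; have := hn2 hnD
        omega
      obtain ⟨i, hi⟩ := hone
      have hmap : Ultrafilter.map b p.1 = p.1 := by rw [← hhb p, hp]
      have : b ⁻¹' {n | n ∈ D ∧ c n = i} ∈ p.1 := by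
        rw [← Ultrafilter.mem_map, hmap]; exact hi
      obtain ⟨n, hn1, hn2⟩ := Ultrafilter.nonempty_of_mem (Filter.inter_mem hi this)
      exact col_key b D hDinj hDfix hn1.1 hn2.1 (hn2.2.trans hn1.2.symm)
    · intro hp
      have hmap : Ultrafilter.map b p.1 = p.1 := by
        apply Ultrafilter.coe_injective
        apply Filter.ext
        intro S
        rw [Ultrafilter.coe_map, Filter.mem_map]
        constructor
        · intro hS
          have : F ∩ b ⁻¹' S ⊆ S := by
            rintro n ⟨⟨_, hbn⟩, hn⟩
            simpa [hbn] using hn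
          exact Filter.mem_of_superset (Filter.inter_mem hp hS) this
        · intro hS
          have : F ∩ S ⊆ b ⁻¹' S := by
            rintro n ⟨⟨_, hbn⟩, hn⟩
            simp [Set.mem_preimage, hbn, hn]
          exact Filter.mem_of_superset (Filter.inter_mem hp hS) this
      exact Subtype.ext ((hhb p).trans hmap)
  rw [key]
  have : {p : NStar | F ∈ p.1} =
      (Subtype.val : NStar → Ultrafilter ℕ) ⁻¹' {u : Ultrafilter ℕ | F ∈ u} := rfl
  rw [this]
  exact IsClopen.preimage ⟨ultrafilter_isClosed_basic F, ultrafilter_isOpen_basic F⟩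
    continuous_subtype_val
end

section
/- Let L = ω₁ + 1 with the topology in which points below ω₁ are isolated and neighborhoods of ω₁ are co-countable sets containing it. Define f : L → L by f(ω₁) = ω₁, f(2·α) = 2·α + 1, and f(2·α + 1) = 2·α (using ordinal multiplication and addition). Then f is a continuous involution of L whose unique fixed point is ω₁. -/
open Ordinal Topology

/-- `L` is the ordinal `ω₁ + 1`, i.e. the set of ordinals `≤ ω₁`. -/
abbrev L : Type 1 := (Set.Iic (ω₁ : Ordinal) : Set Ordinal)

/-- The top point `ω₁` of `L`. -/
noncomputable def Ltop : L := ⟨ω₁, Set.mem_Iic.2 le_rfl⟩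

/-- Every element of `L` is either the top, an even ordinal, or an odd ordinal. -/
lemma L_cases (x : L) : x = Ltop ∨
    ∃ (α : Ordinal) (h1 : 2 * α ≤ ω₁) (h2 : 2 * α + 1 ≤ ω₁),
      x = ⟨2 * α, Set.mem_Iic.2 h1⟩ ∨ x = ⟨2 * α + 1, Set.mem_Iic.2 h2⟩ := by
  obtain ⟨v, hv⟩ := x
  rcases eq_or_lt_of_le (Set.mem_Iic.1 hv) with h | h
  · left; exact Subtype.ext h
  · right
    refine ⟨v / 2, ?_, ?_, ?_⟩
    · refine le_of_lt (lt_of_le_of_lt ?_ h)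
      conv_rhs => rw [← Ordinal.div_add_mod v 2]
      exact le_self_add
    · have h2v : 2 * (v / 2) ≤ v := by
        conv_rhs => rw [← Ordinal.div_add_mod v 2]
        exact le_self_add
      have : 2 * (v / 2) + 1 ≤ v + 1 := add_le_add_left h2v 1
      refine le_of_lt (lt_of_le_of_lt this ?_)
      rw [Ordinal.add_one_eq_succ]
      exact (Cardinal.isSuccLimit_omega 1).succ_lt h
    · have hm : v % 2 < 2 := Ordinal.mod_lt v two_ne_zero
      have hm1 : v % 2 ≤ 1 := Order.lt_succ_iff.1
        (show v % 2 < Order.succ 1 from by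
          rwa [show Order.succ (1 : Ordinal) = 2 from by
            rw [Order.succ_eq_add_one]; norm_num])
      have hdm : 2 * (v / 2) + v % 2 = v := Ordinal.div_add_mod v 2
      rcases lt_or_eq_of_le hm1 with hm0 | hm1
      · rw [Ordinal.lt_one_iff_zero] at hm0
        rw [hm0, add_zero] at hdm
        left; exact Subtype.ext hdm.symm
      · rw [hm1] at hdm
        right; exact Subtype.ext hdm.symm

/-- Let `L = ω₁ + 1` carry the topology `τ` in which points below `ω₁` are isolated
and neighbourhoods of `ω₁` are co-countable sets containing it (i.e. a set is open
iff, whenever it contains `ω₁`, its complement is countable).  If `f : L → L`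
satisfies `f ω₁ = ω₁`, `f (2·α) = 2·α + 1` and `f (2·α + 1) = 2·α` (ordinal
arithmetic), then `f` is a continuous involution whose unique fixed point is `ω₁`. -/
theorem stmt5 (τ : TopologicalSpace L)
    (hτ : ∀ s : Set L, IsOpen[τ] s ↔ (Ltop ∈ s → sᶜ.Countable))
    (f : L → L)
    (hf1 : f Ltop = Ltop)
    (hf2 : ∀ (α : Ordinal) (h1 : 2 * α ≤ ω₁) (h2 : 2 * α + 1 ≤ ω₁),
      f ⟨2 * α, Set.mem_Iic.2 h1⟩ = ⟨2 * α + 1, Set.mem_Iic.2 h2⟩)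
    (hf3 : ∀ (α : Ordinal) (h1 : 2 * α ≤ ω₁) (h2 : 2 * α + 1 ≤ ω₁),
      f ⟨2 * α + 1, Set.mem_Iic.2 h2⟩ = ⟨2 * α, Set.mem_Iic.2 h1⟩) :
    Continuous[τ, τ] f ∧ f ∘ f = id ∧ ∀ x : L, f x = x ↔ x = Ltop := by
  have hinv : ∀ x : L, f (f x) = x := by
    intro x
    rcases L_cases x with h | ⟨α, h1, h2, h | h⟩
    · rw [h, hf1, hf1]
    · rw [h, hf2 α h1 h2, hf3 α h1 h2]
    · rw [h, hf3 α h1 h2, hf2 α h1 h2]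
  refine ⟨?_, funext fun x => hinv x, ?_⟩
  · rw [continuous_def]
    intro s hs
    rw [hτ] at hs ⊢
    intro hmem
    have hS : Ltop ∈ s := by
      have : f Ltop ∈ s := hmem
      rwa [hf1] at this
    have hc : sᶜ.Countable := hs hS
    have : (f ⁻¹' s)ᶜ = f '' sᶜ := by
      ext x
      simp only [Set.mem_compl_iff, Set.mem_preimage, Set.mem_image]
      constructor
      · intro hx; exact ⟨f x, hx, hinv x⟩
      · rintro ⟨y, hy, rfl⟩; rwa [hinv]
    rw [this]
    exact hc.image f
  · intro x
    constructor
    · intro hfx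
      rcases L_cases x with h | ⟨α, h1, h2, h | h⟩
      · exact h
      · exfalso
        rw [h, hf2 α h1 h2] at hfx
        have := congrArg Subtype.val hfx
        simp only at this
        rw [Ordinal.add_one_eq_succ] at this
        exact (Order.lt_succ (2 * α)).ne' this
      · exfalso
        rw [h, hf3 α h1 h2] at hfx
        have := congrArg Subtype.val hfx
        simp only at this
        rw [Ordinal.add_one_eq_succ] at this
        exact (Order.lt_succ (2 * α)).ne this
    · intro h; rw [h, hf1]
end

section
/- Let L and f be as above. Then the Stone–Čech extension βf : βL → βL has ω₁ as its unique fixed point; in particular, for every p ∈ βL \ L one has βf(p) ≠ p. -/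
open Ordinal Topology

/-- `L = ω₁ + 1`, the ordinals `≤ ω₁` (as a bare type, with the topology below). -/
def LP : Type 1 := {o : Ordinal // o ≤ ω₁}

/-- The point of `L` corresponding to an ordinal `o ≤ ω₁`. -/
def LPmk (o : Ordinal) (h : o ≤ ω₁) : LP := ⟨o, h⟩

/-- The topology on `L = ω₁ + 1` in which all points below `ω₁` are isolated and
the neighbourhoods of `ω₁` are exactly the co-countable sets containing it:
a set is open iff, whenever it contains `ω₁`, its complement is countable. -/
instance : TopologicalSpace LP where
  IsOpen s := LPmk ω₁ le_rfl ∈ s → sᶜ.Countable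
  isOpen_univ := by simp
  isOpen_inter s t hs ht h := by
    rw [Set.compl_inter]
    exact (hs h.1).union (ht h.2)
  isOpen_sUnion S hS h := by
    obtain ⟨s, hsS, hs⟩ := h
    exact ((hS s hsS) hs).mono (Set.compl_subset_compl.2 (Set.subset_sUnion_of_mem hsS))

lemma LP.isOpen_iff (s : Set LP) : IsOpen s ↔ (LPmk ω₁ le_rfl ∈ s → sᶜ.Countable) := Iff.rfl

noncomputable section AuxStoneCech

variable {α : Type*} [TopologicalSpace α]

/-- The canonical surjection from ultrafilters on `α` onto `StoneCech α`. -/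
def SCmkq (u : Ultrafilter α) : StoneCech α := T2Quotient.mk (Quot.mk _ u : PreStoneCech α)

lemma SCmkq_surjective : Function.Surjective (SCmkq (α := α)) := by
  intro p
  obtain ⟨q, rfl⟩ := T2Quotient.surjective_mk (PreStoneCech α) p
  obtain ⟨u, rfl⟩ := Quot.exists_rep q
  exact ⟨u, rfl⟩

lemma SCmkq_converges {u : Ultrafilter α} {x : α} (h : ↑u ≤ 𝓝 x) :
    SCmkq u = stoneCechUnit x :=
  congrArg T2Quotient.mk (Quot.sound ⟨x, h, pure_le_nhds x⟩)

variable {β : Type*} [TopologicalSpace β] [T2Space β] [CompactSpace β] {g : α → β}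

lemma SCextend_mkq (hg : Continuous g) (u : Ultrafilter α) :
    stoneCechExtend hg (SCmkq u) = Ultrafilter.extend g u :=
  T2Quotient.lift_mk (continuous_preStoneCechExtend hg) _

lemma SCextend_mkq_const [DiscreteTopology β] {b : β} (hg : Continuous g) {u : Ultrafilter α}
    {A : Set α} (hAu : A ∈ u) (hb : ∀ x ∈ A, g x = b) :
    stoneCechExtend hg (SCmkq u) = b := by
  rw [SCextend_mkq, ultrafilter_extend_eq_iff]
  rw [show (𝓝 b) = pure b from nhds_discrete β ▸ rfl]
  rw [Ultrafilter.coe_map, Filter.le_pure_iff, Filter.mem_map]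
  exact Filter.mem_of_superset hAu fun x hx => hb x hx

end AuxStoneCech

lemma Ordinal.eq_zero_or_eq_one_of_lt_two {a : Ordinal} (h : a < 2) : a = 0 ∨ a = 1 := by
  rw [← Ordinal.succ_one, Order.lt_succ_iff] at h
  exact Ordinal.le_one_iff.mp h

/-- The parity of `f x` is opposite to that of `x`, for `x` below `ω₁`. -/
lemma LP.parity_flip (f : LP → LP)
    (hf2 : ∀ (α : Ordinal) (h1 : 2 * α ≤ ω₁) (h2 : 2 * α + 1 ≤ ω₁),
      f (LPmk (2 * α) h1) = LPmk (2 * α + 1) h2)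
    (hf3 : ∀ (α : Ordinal) (h1 : 2 * α ≤ ω₁) (h2 : 2 * α + 1 ≤ ω₁),
      f (LPmk (2 * α + 1) h2) = LPmk (2 * α) h1)
    (x : LP) (hlt : x.1 < ω₁) : ((f x).1 % 2 = 0 ↔ ¬ x.1 % 2 = 0) := by
  have hdm : 2 * (x.1 / 2) + x.1 % 2 = x.1 := Ordinal.div_add_mod x.1 2
  rcases Ordinal.eq_zero_or_eq_one_of_lt_two (Ordinal.mod_lt x.1 two_ne_zero) with hm | hm
  · -- even case
    obtain ⟨d, hd⟩ : ∃ d : Ordinal, x.1 = 2 * d := ⟨x.1 / 2, by rw [hm, add_zero] at hdm; exact hdm.symm⟩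
    have h1 : 2 * d ≤ ω₁ := by rw [← hd]; exact x.2
    have h2 : 2 * d + 1 ≤ ω₁ := by
      rw [Ordinal.add_one_eq_succ]
      exact ((Cardinal.isSuccLimit_omega 1).succ_lt (by rw [← hd]; exact hlt)).le
    have hxeq : x = LPmk (2 * d) h1 := Subtype.ext hd
    have hfx : f x = LPmk (2 * d + 1) h2 := by rw [hxeq]; exact hf2 d h1 h2
    have hmod : (2 * d + 1) % 2 = 1 := by
      rw [Ordinal.mul_add_mod_self, Ordinal.mod_eq_of_lt one_lt_two]
    rw [hfx]
    show (2 * d + 1) % 2 = 0 ↔ ¬ x.1 % 2 = 0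
    rw [hmod, hm]
    simp
  · -- odd case
    obtain ⟨d, hd⟩ : ∃ d : Ordinal, x.1 = 2 * d + 1 := ⟨x.1 / 2, by rw [hm] at hdm; exact hdm.symm⟩
    have h2 : 2 * d + 1 ≤ ω₁ := by rw [← hd]; exact x.2
    have h1 : 2 * d ≤ ω₁ := (le_self_add (a := 2 * d) (b := 1)).trans h2
    have hxeq : x = LPmk (2 * d + 1) h2 := Subtype.ext hd
    have hfx : f x = LPmk (2 * d) h1 := by rw [hxeq]; exact hf3 d h1 h2
    rw [hfx]
    show (2 * d) % 2 = 0 ↔ ¬ x.1 % 2 = 0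
    rw [Ordinal.mul_mod, hm]
    simp

/-- Let `f : L → L` be the continuous involution with `f ω₁ = ω₁`,
`f (2·α) = 2·α + 1`, `f (2·α + 1) = 2·α`.  Then the Stone–Čech extension
`βf : βL → βL` has `ω₁` as its unique fixed point; in particular `βf p ≠ p`
for every `p ∈ βL \ L`. -/
theorem stmt6 (f : LP → LP)
    (hf1 : f (LPmk ω₁ le_rfl) = LPmk ω₁ le_rfl)
    (hf2 : ∀ (α : Ordinal) (h1 : 2 * α ≤ ω₁) (h2 : 2 * α + 1 ≤ ω₁),
      f (LPmk (2 * α) h1) = LPmk (2 * α + 1) h2)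
    (hf3 : ∀ (α : Ordinal) (h1 : 2 * α ≤ ω₁) (h2 : 2 * α + 1 ≤ ω₁),
      f (LPmk (2 * α + 1) h2) = LPmk (2 * α) h1)
    (hc : Continuous f) :
    (∀ p : StoneCech LP,
        stoneCechExtend (continuous_stoneCechUnit.comp hc) p = p ↔
          p = stoneCechUnit (LPmk ω₁ le_rfl)) ∧
    (∀ p : StoneCech LP, p ∉ Set.range (stoneCechUnit : LP → StoneCech LP) →
        stoneCechExtend (continuous_stoneCechUnit.comp hc) p ≠ p) := by
  set top : LP := LPmk ω₁ le_rfl with htop_def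
  set hβ : Continuous (stoneCechUnit ∘ f : LP → StoneCech LP) :=
    continuous_stoneCechUnit.comp hc with hβ_def
  -- the key claim
  have key : ∀ p : StoneCech LP, p ≠ stoneCechUnit top → stoneCechExtend hβ p ≠ p := by
    intro p hp hfix
    obtain ⟨u, rfl⟩ := SCmkq_surjective p
    -- `u` does not converge to `top`
    have hconv : ¬ (↑u ≤ 𝓝 top) := fun h => hp (SCmkq_converges h)
    rw [Filter.le_def] at hconv
    push_neg at hconv
    obtain ⟨s, hs, hsu⟩ := hconv
    obtain ⟨U, hUs, hU, hUtop⟩ := mem_nhds_iff.mp hs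
    have hUu : U ∉ u := fun h => hsu (Filter.mem_of_superset h hUs)
    have hS : Uᶜ ∈ u := Ultrafilter.compl_mem_iff_notMem.mpr hUu
    have hScnt : (Uᶜ).Countable := (LP.isOpen_iff U).mp hU hUtop
    have htopS : top ∉ Uᶜ := fun h => h hUtop
    -- main Bool-indicator argument
    have main : ∀ A : Set LP, A ∈ u → A.Countable → top ∉ A →
        (∀ x ∈ A, f x ∉ A) → False := by
      intro A hAu hAc hAtop hAf
      have hne : A.Nonempty := Ultrafilter.nonempty_of_mem hAu
      have hclopen : IsClopen A := by
        constructor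
        · rw [← isOpen_compl_iff, LP.isOpen_iff]
          intro _
          rwa [compl_compl]
        · rw [LP.isOpen_iff]
          intro h
          exact absurd h hAtop
      have hg : Continuous A.boolIndicator :=
        (continuous_boolIndicator_iff_isClopen A).mpr hclopen
      have h1 : stoneCechExtend hg (SCmkq u) = true :=
        SCextend_mkq_const hg hAu fun x hx => (A.mem_iff_boolIndicator x).mp hx
      have hgf : Continuous (A.boolIndicator ∘ f) := hg.comp hc
      have h2 : stoneCechExtend hgf (SCmkq u) = false :=
        SCextend_mkq_const hgf hAu fun x hx =>
          (A.notMem_iff_boolIndicator (f x)).mp (hAf x hx)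
      have hnat : stoneCechExtend hg ∘ stoneCechExtend hβ = stoneCechExtend hgf := by
        apply stoneCech_hom_ext
          ((continuous_stoneCechExtend hg).comp (continuous_stoneCechExtend hβ))
          (continuous_stoneCechExtend hgf)
        funext x
        have e1 : stoneCechExtend hβ (stoneCechUnit x) = stoneCechUnit (f x) :=
          congrFun (stoneCechExtend_extends hβ) x
        have e2 : stoneCechExtend hg (stoneCechUnit (f x)) = A.boolIndicator (f x) :=
          congrFun (stoneCechExtend_extends hg) (f x)
        have e3 : stoneCechExtend hgf (stoneCechUnit x) = A.boolIndicator (f x) :=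
          congrFun (stoneCechExtend_extends hgf) x
        show stoneCechExtend hg (stoneCechExtend hβ (stoneCechUnit x)) =
          stoneCechExtend hgf (stoneCechUnit x)
        rw [e1, e2, e3]
      have : (true : Bool) = false := by
        calc (true : Bool) = stoneCechExtend hg (SCmkq u) := h1.symm
        _ = stoneCechExtend hg (stoneCechExtend hβ (SCmkq u)) := by rw [hfix]
        _ = stoneCechExtend hgf (SCmkq u) := congrFun hnat _
        _ = false := h2
      exact Bool.noConfusion this
    -- split `Uᶜ` according to parity
    have hlt : ∀ x ∈ (Uᶜ : Set LP), x.1 < ω₁ := by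
      intro x hx
      rcases lt_or_eq_of_le x.2 with h | h
      · exact h
      · exact absurd (Subtype.ext h : x = top) (fun he => hx (he ▸ hUtop))
    set P : Set LP := {x : LP | x.1 % 2 = 0} with hP_def
    rcases u.mem_or_compl_mem P with hPu | hPu
    · refine main (Uᶜ ∩ P) (Filter.inter_mem hS hPu)
        (hScnt.mono Set.inter_subset_left) (fun h => htopS h.1) ?_
      rintro x ⟨hxS, hxP⟩ ⟨-, hfxP⟩
      exact (LP.parity_flip f hf2 hf3 x (hlt x hxS)).mp hfxP hxP
    · refine main (Uᶜ ∩ Pᶜ) (Filter.inter_mem hS hPu)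
        (hScnt.mono Set.inter_subset_left) (fun h => htopS h.1) ?_
      rintro x ⟨hxS, hxP⟩ ⟨-, hfxP⟩
      exact hfxP ((LP.parity_flip f hf2 hf3 x (hlt x hxS)).mpr hxP)
  constructor
  · intro p
    constructor
    · intro h
      by_contra hne
      exact key p hne h
    · rintro rfl
      calc stoneCechExtend hβ (stoneCechUnit top)
          = stoneCechUnit (f top) := congrFun (stoneCechExtend_extends hβ) top
        _ = stoneCechUnit top := by rw [htop_def, hf1]
  · intro p hpr
    exact key p (fun h => hpr ⟨top, h.symm⟩)
end

section
/- If p is a point of βL \ L (L as above), then there exists α < ω₁ such that p lies in the closure of the set of ordinals below α. -/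
open Ordinal Topology

/-- The underlying ordinal of a point of `L`. -/
def LPval (x : LP) : Ordinal := x.1

/-- Every point of `βL \ L` lies in the closure of some initial segment
`[0, α)` of `L` with `α < ω₁`. -/
theorem stmt7 (p : StoneCech LP)
    (hp : p ∉ Set.range (stoneCechUnit : LP → StoneCech LP)) :
    ∃ α : Ordinal, α < ω₁ ∧
      p ∈ closure (stoneCechUnit '' {x : LP | LPval x < α}) := by
  by_contra hcon
  push_neg at hcon
  set u : StoneCech LP := stoneCechUnit (LPmk ω₁ le_rfl) with hu
  have hpu : p ≠ u := fun h => hp ⟨_, h.symm⟩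
  obtain ⟨U, O, hUo, hOo, hpU, huO, hdisj⟩ := t2_separation hpu
  set V : Set LP := stoneCechUnit ⁻¹' O with hV
  have hVopen : IsOpen V := hOo.preimage continuous_stoneCechUnit
  have hmem : LPmk ω₁ le_rfl ∈ V := huO
  have hcnt : Vᶜ.Countable := hVopen hmem
  have hlt : ∀ x ∈ Vᶜ, LPval x < ω₁ := by
    intro x hx
    refine lt_of_le_of_ne x.2 fun hxe => hx ?_
    have : x = LPmk ω₁ le_rfl := Subtype.ext hxe
    rw [this]; exact hmem
  -- bound the countable set
  set S : Set Ordinal := insert 0 (LPval '' Vᶜ) with hS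
  have hScnt : S.Countable := (hcnt.image _).insert 0
  have hSne : S.Nonempty := ⟨0, Set.mem_insert _ _⟩
  obtain ⟨f, hf⟩ := hScnt.exists_eq_range hSne
  have hflt : ∀ n, f n < ω₁ := by
    intro n
    have : f n ∈ S := hf ▸ Set.mem_range_self n
    rcases this with h | ⟨x, hx, hxe⟩
    · rw [h]; exact Ordinal.omega_pos 1
    · rw [← hxe]; exact hlt x hx
  have hsup : iSup f < ω₁ := by
    rw [← Cardinal.ord_aleph]
    refine iSup_lt_ord ?_ (fun n => (Cardinal.ord_aleph 1).symm ▸ hflt n)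
    rw [Cardinal.isRegular_aleph_one.cof_eq, Cardinal.mk_nat]
    exact Cardinal.aleph0_lt_aleph_one
  set α : Ordinal := iSup f + 1 with hα
  have hαlt : α < ω₁ := by
    have := (Cardinal.isSuccLimit_omega 1).succ_lt hsup
    rwa [← Ordinal.add_one_eq_succ] at this
  -- the complement maps into O
  have hsubO : stoneCechUnit '' {x : LP | LPval x < α}ᶜ ⊆ O := by
    rintro _ ⟨x, hx, rfl⟩
    have hxV : x ∈ V := by
      by_contra hxV
      refine hx ?_
      have : LPval x ∈ S := Set.mem_insert_of_mem _ ⟨x, hxV, rfl⟩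
      rw [hf] at this
      obtain ⟨n, hn⟩ := this
      calc LPval x = f n := hn.symm
        _ ≤ iSup f := le_ciSup (Ordinal.bddAbove_range f) n
        _ < α := lt_add_one _
    exact hxV
  -- p is in the closure of the image of the complement
  have hcover : p ∈ closure (stoneCechUnit '' {x : LP | LPval x < α}) ∪
      closure (stoneCechUnit '' {x : LP | LPval x < α}ᶜ) := by
    rw [← closure_union, ← Set.image_union, Set.union_compl_self, Set.image_univ,
      denseRange_stoneCechUnit.closure_eq]
    trivial
  have hpc : p ∈ closure (stoneCechUnit '' {x : LP | LPval x < α}ᶜ) :=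
    hcover.resolve_left (hcon α hαlt)
  rw [mem_closure_iff] at hpc
  obtain ⟨q, hqU, hqim⟩ := hpc U hUo hpU
  exact (Set.disjoint_left.1 hdisj hqU) (hsubO hqim)
end

section
/- For any topological space (X, τ), the Gδ-modification τ_δ satisfies w(X, τ_δ) ≤ w(X, τ)^{ℵ₀}, where w denotes topological weight. -/
open Cardinal Topology

/-- The Gδ-modification of a topology `t`: the topology generated by all
countable intersections of `t`-open sets. -/
def gDelta {X : Type*} (t : TopologicalSpace X) : TopologicalSpace X :=
  TopologicalSpace.generateFrom
    {s : Set X | ∃ f : ℕ → Set X, (∀ n, IsOpen[t] (f n)) ∧ s = ⋂ n, f n}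

/-- The weight of a topological space: the least cardinality of a base. -/
noncomputable def tweight (X : Type*) (t : TopologicalSpace X) : Cardinal :=
  ⨅ B : {B : Set (Set X) // @TopologicalSpace.IsTopologicalBasis X t B}, #B.1

lemma aux_basis {X : Type*} (t : TopologicalSpace X) (B : Set (Set X))
    (hB : @TopologicalSpace.IsTopologicalBasis X t B) :
    @TopologicalSpace.IsTopologicalBasis X (gDelta t)
      {s : Set X | ∃ f : ℕ → Set X, (∀ n, f n ∈ B) ∧ s = ⋂ n, f n} := by
  apply @TopologicalSpace.isTopologicalBasis_of_isOpen_of_nhds X (gDelta t)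
  · rintro s ⟨f, hf, rfl⟩
    exact TopologicalSpace.isOpen_generateFrom_of_mem
      ⟨f, fun n => hB.isOpen (hf n), rfl⟩
  · intro x u hx hu
    induction hu with
    | basic s hs =>
      obtain ⟨f, hf, rfl⟩ := hs
      have : ∀ n, ∃ b ∈ B, x ∈ b ∧ b ⊆ f n := by
        intro n
        exact hB.exists_subset_of_mem_open (Set.mem_iInter.1 hx n) (hf n)
      choose b hbB hxb hbf using this
      exact ⟨⋂ n, b n, ⟨b, hbB, rfl⟩, Set.mem_iInter.2 hxb,
        Set.iInter_mono hbf⟩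
    | univ =>
      obtain ⟨b, hbB, hxb⟩ := TopologicalSpace.IsTopologicalBasis.exists_subset_of_mem_open
        hB (Set.mem_univ x) isOpen_univ
      exact ⟨⋂ _ : ℕ, b, ⟨fun _ => b, fun _ => hbB, rfl⟩,
        Set.mem_iInter.2 fun _ => hxb.1, by simp⟩
    | inter u v _ _ ihu ihv =>
      obtain ⟨s, ⟨f, hf, rfl⟩, hxs, hsu⟩ := ihu hx.1
      obtain ⟨s', ⟨g, hg, rfl⟩, hxs', hsv⟩ := ihv hx.2
      have e : ℕ ≃ ℕ ⊕ ℕ := (Denumerable.eqv (ℕ ⊕ ℕ)).symm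
      refine ⟨⋂ n, Sum.elim f g (e n), ⟨fun n => Sum.elim f g (e n),
        fun n => ?_, rfl⟩, ?_, ?_⟩
      · show Sum.elim f g (e n) ∈ B
        rcases e n with a | a
        · exact hf a
        · exact hg a
      all_goals
        rw [e.surjective.iInter_comp, show ⋂ i, Sum.elim f g i
          = (⋂ n, f n) ∩ ⋂ n, g n by ext y; simp [Sum.forall]]
      · exact ⟨hxs, hxs'⟩
      · exact Set.inter_subset_inter hsu hsv
    | sUnion S _ ih =>
      obtain ⟨u, huS, hxu⟩ := hx
      obtain ⟨s, hs, hxs, hsu⟩ := ih u huS hxu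
      exact ⟨s, hs, hxs, hsu.trans (Set.subset_sUnion_of_mem huS)⟩

/-- For any space `(X, τ)` of infinite weight, the Gδ-modification `τ_δ` satisfies
`w(X, τ_δ) ≤ w(X, τ) ^ ℵ₀`. -/
theorem stmt9 {X : Type*} (t : TopologicalSpace X) (h : ℵ₀ ≤ tweight X t) :
    tweight X (gDelta t) ≤ tweight X t ^ ℵ₀ := by
  have ne : Nonempty {B : Set (Set X) // @TopologicalSpace.IsTopologicalBasis X t B} :=
    ⟨⟨_, @TopologicalSpace.isTopologicalBasis_opens X t⟩⟩
  -- get a basis attaining the weight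
  have hmem := csInf_mem (Set.range_nonempty
    (fun B : {B : Set (Set X) // @TopologicalSpace.IsTopologicalBasis X t B} => #B.1))
  obtain ⟨⟨B, hB⟩, hBw⟩ := hmem
  set C : Set (Set X) := {s : Set X | ∃ f : ℕ → Set X, (∀ n, f n ∈ B) ∧ s = ⋂ n, f n}
  have hC : @TopologicalSpace.IsTopologicalBasis X (gDelta t) C := aux_basis t B hB
  have h1 : tweight X (gDelta t) ≤ #C := ciInf_le' _ (⟨C, hC⟩ :
    {B : Set (Set X) // @TopologicalSpace.IsTopologicalBasis X (gDelta t) B})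
  have h2 : #C ≤ #B ^ ℵ₀ := by
    have : #C ≤ #(ℕ → B) := by
      apply Cardinal.mk_le_of_surjective (f := fun g : ℕ → B => (⟨⋂ n, (g n : Set X),
        ⟨fun n => (g n : Set X), fun n => (g n).2, rfl⟩⟩ : C))
      rintro ⟨s, f, hf, rfl⟩
      exact ⟨fun n => ⟨f n, hf n⟩, rfl⟩
    rw [Cardinal.mk_arrow] at this
    simpa [Cardinal.lift_id, Cardinal.mk_nat] using this
  calc tweight X (gDelta t) ≤ #B ^ ℵ₀ := h1.trans h2
    _ ≤ tweight X t ^ ℵ₀ := by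
        apply Cardinal.power_le_power_right
        rw [tweight, ← sInf_range]
        exact hBw.le
end

section
/- If a Boolean algebra B has the property that for all countable A, C ⊆ B with a ∧ c = 0 for all a ∈ A, c ∈ C there exists d ∈ B with a ≤ d and d ∧ c = 0 for all a ∈ A, c ∈ C, then the Stone space St(B) is an F-space. -/
variable {B : Type*} [BooleanAlgebra B]

/-- An ultrafilter on a Boolean algebra `B`. -/
def IsUltra (F : Set B) : Prop :=
  ⊤ ∈ F ∧ ⊥ ∉ F ∧ (∀ a ∈ F, ∀ b ∈ F, a ⊓ b ∈ F) ∧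
    (∀ a ∈ F, ∀ b : B, a ≤ b → b ∈ F) ∧ (∀ a : B, a ∈ F ∨ aᶜ ∈ F)

/-- The Stone space of a Boolean algebra `B`: its set of ultrafilters. -/
def StSp (B : Type*) [BooleanAlgebra B] : Type _ := {F : Set B // IsUltra F}

/-- The Stone topology, generated by the basic clopen sets `{F : a ∈ F}`. -/
instance : TopologicalSpace (StSp B) :=
  TopologicalSpace.generateFrom
    {S : Set (StSp B) | ∃ a : B, S = {F : StSp B | a ∈ F.1}}

namespace StoneAux

open Filter Topology

/-- The basic clopen set associated to `a : B`. -/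
def Ba (a : B) : Set (StSp B) := {F : StSp B | a ∈ F.1}

lemma Ba_top : Ba (⊤ : B) = Set.univ :=
  Set.eq_univ_of_forall fun F => F.2.1

lemma Ba_bot : Ba (⊥ : B) = ∅ :=
  Set.eq_empty_iff_forall_notMem.mpr fun F h => F.2.2.1 h

lemma Ba_inf (a b : B) : Ba (a ⊓ b) = Ba a ∩ Ba b := by
  ext F
  obtain ⟨-, -, hinf, hup, -⟩ := F.2
  exact ⟨fun h => ⟨hup _ h a inf_le_left, hup _ h b inf_le_right⟩,
    fun ⟨h1, h2⟩ => hinf a h1 b h2⟩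

lemma Ba_mono {a b : B} (h : a ≤ b) : Ba a ⊆ Ba b :=
  fun F hF => F.2.2.2.2.1 a hF b h

lemma Ba_compl (a : B) : (Ba a)ᶜ = Ba aᶜ := by
  ext F
  obtain ⟨-, hbot, hinf, -, htot⟩ := F.2
  constructor
  · intro h
    rcases htot a with h' | h'
    · exact absurd h' h
    · exact h'
  · intro h h'
    exact hbot (by simpa using hinf a h' aᶜ h)

lemma isOpen_Ba (a : B) : IsOpen (Ba a) :=
  TopologicalSpace.GenerateOpen.basic _ ⟨a, rfl⟩

lemma isClosed_Ba (a : B) : IsClosed (Ba a) := by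
  rw [← isOpen_compl_iff, Ba_compl]
  exact isOpen_Ba _

lemma exists_basic {U : Set (StSp B)} (hU : IsOpen U) :
    ∀ x ∈ U, ∃ a : B, x ∈ Ba a ∧ Ba a ⊆ U := by
  have h : TopologicalSpace.GenerateOpen
      {S : Set (StSp B) | ∃ a : B, S = {F : StSp B | a ∈ F.1}} U := hU
  clear hU
  induction h with
  | basic S hS =>
    obtain ⟨a, rfl⟩ := hS
    exact fun x hx => ⟨a, hx, subset_rfl⟩
  | univ =>
    exact fun x _ => ⟨⊤, x.2.1, fun _ _ => trivial⟩
  | inter U V _ _ ihU ihV =>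
    intro x hx
    obtain ⟨a, hxa, haU⟩ := ihU x hx.1
    obtain ⟨b, hxb, hbV⟩ := ihV x hx.2
    refine ⟨a ⊓ b, ?_, ?_⟩
    · rw [Ba_inf]; exact ⟨hxa, hxb⟩
    · rw [Ba_inf]; exact fun y hy => ⟨haU hy.1, hbV hy.2⟩
  | sUnion S _ ih =>
    intro x hx
    obtain ⟨s, hsS, hxs⟩ := hx
    obtain ⟨a, h1, h2⟩ := ih s hsS x hxs
    exact ⟨a, h1, h2.trans (Set.subset_sUnion_of_mem hsS)⟩

instance : CompactSpace (StSp B) := by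
  rw [← isCompact_univ_iff, isCompact_iff_ultrafilter_le_nhds]
  intro 𝒰 _
  have hultra : IsUltra {a : B | Ba a ∈ 𝒰} := by
    refine ⟨?_, ?_, ?_, ?_, ?_⟩
    · show Ba (⊤ : B) ∈ 𝒰
      rw [Ba_top]; exact Filter.univ_mem
    · show Ba (⊥ : B) ∉ 𝒰
      rw [Ba_bot]; exact Filter.empty_notMem _
    · intro a ha b hb
      show Ba (a ⊓ b) ∈ 𝒰
      rw [Ba_inf]; exact Filter.inter_mem ha hb
    · intro a ha b hab
      exact Filter.mem_of_superset ha (Ba_mono hab)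
    · intro a
      rcases 𝒰.mem_or_compl_mem (Ba a) with h | h
      · exact Or.inl h
      · right; show Ba aᶜ ∈ 𝒰; rwa [← Ba_compl]
  refine ⟨⟨_, hultra⟩, Set.mem_univ _, ?_⟩
  refine le_nhds_iff.mpr ?_
  intro s hxs hso
  obtain ⟨a, hxa, has⟩ := exists_basic hso _ hxs
  exact Filter.mem_of_superset hxa has

lemma exists_ultra {b : B} (hb : b ≠ ⊥) : ∃ F : Set B, IsUltra F ∧ b ∈ F := by
  set P : Set (Set B) :=
    {F | b ∈ F ∧ ⊥ ∉ F ∧ (∀ x ∈ F, ∀ y ∈ F, x ⊓ y ∈ F) ∧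
      (∀ x ∈ F, ∀ y : B, x ≤ y → y ∈ F)} with hP
  have hseed : {x : B | b ≤ x} ∈ P :=
    ⟨le_rfl, fun h => hb (le_bot_iff.mp h), fun x hx y hy => le_inf hx hy,
      fun x hx y hxy => hx.trans hxy⟩
  have hchain : ∀ c ⊆ P, IsChain (· ⊆ ·) c → c.Nonempty →
      ∃ ub ∈ P, ∀ s ∈ c, s ⊆ ub := by
    intro c hcP hchain hcne
    obtain ⟨F0, hF0⟩ := hcne
    refine ⟨⋃₀ c, ⟨⟨F0, hF0, (hcP hF0).1⟩, ?_, ?_, ?_⟩, fun s hs => Set.subset_sUnion_of_mem hs⟩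
    · rintro ⟨F, hF, hbot⟩
      exact (hcP hF).2.1 hbot
    · rintro x ⟨F1, hF1, hx⟩ y ⟨F2, hF2, hy⟩
      rcases hchain.total hF1 hF2 with h | h
      · exact ⟨F2, hF2, (hcP hF2).2.2.1 x (h hx) y hy⟩
      · exact ⟨F1, hF1, (hcP hF1).2.2.1 x hx y (h hy)⟩
    · rintro x ⟨F, hF, hx⟩ y hxy
      exact ⟨F, hF, (hcP hF).2.2.2 x hx y hxy⟩
  obtain ⟨M, -, hMP, hmax⟩ := zorn_subset_nonempty P hchain _ hseed
  · obtain ⟨hbM, hbotM, hinfM, hupM⟩ := hMP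
    refine ⟨M, ⟨hupM b hbM ⊤ le_top, hbotM, hinfM, hupM, ?_⟩, hbM⟩
    intro a
    by_contra hcon
    push_neg at hcon
    obtain ⟨ha, hac⟩ := hcon
    set Ma : Set B := {x | ∃ m ∈ M, m ⊓ a ≤ x} with hMa
    by_cases hbotMa : ⊥ ∈ Ma
    · obtain ⟨m, hm, hma⟩ := hbotMa
      have : m ≤ aᶜ := le_compl_iff_disjoint_right.mpr (disjoint_iff.mpr (le_bot_iff.mp hma))
      exact hac (hupM m hm aᶜ this)
    · have hMaP : Ma ∈ P := by
        refine ⟨⟨b, hbM, inf_le_left.trans le_rfl⟩, hbotMa, ?_, ?_⟩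
        · rintro x ⟨m, hm, hmx⟩ y ⟨m', hm', hmy⟩
          exact ⟨m ⊓ m', hinfM m hm m' hm', by
            calc m ⊓ m' ⊓ a ≤ (m ⊓ a) ⊓ (m' ⊓ a) := by
                  simp [inf_assoc, inf_left_comm, le_inf_iff, inf_le_left, inf_le_right]
              _ ≤ x ⊓ y := inf_le_inf hmx hmy⟩
        · rintro x ⟨m, hm, hmx⟩ y hxy
          exact ⟨m, hm, hmx.trans hxy⟩
      have hsub : M ⊆ Ma := fun m hm => ⟨m, hm, inf_le_left⟩
      have : Ma ⊆ M := hmax hMaP hsub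
      exact ha (this ⟨b, hbM, inf_le_right⟩)

lemma eq_bot_of_Ba_empty {b : B} (h : Ba b = ∅) : b = ⊥ := by
  by_contra hb
  obtain ⟨F, hF, hbF⟩ := exists_ultra hb
  exact Set.eq_empty_iff_forall_notMem.mp h ⟨F, hF⟩ hbF

end StoneAux

open StoneAux in
/-- If a Boolean algebra `B` has the property that for all countable `A, C ⊆ B`
with `a ⊓ c = ⊥` for all `a ∈ A`, `c ∈ C` there is `d ∈ B` with `a ≤ d` and
`d ⊓ c = ⊥` for all `a ∈ A`, `c ∈ C`, then the Stone space `St(B)` is an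
F-space: disjoint open Fσ-sets have disjoint closures. -/
theorem stmt17
    (hsep : ∀ A C : Set B, A.Countable → C.Countable →
      (∀ a ∈ A, ∀ c ∈ C, a ⊓ c = ⊥) →
      ∃ d : B, (∀ a ∈ A, a ≤ d) ∧ ∀ c ∈ C, d ⊓ c = ⊥) :
    ∀ U V : Set (StSp B), IsOpen U → IsOpen V →
      (∃ f : ℕ → Set (StSp B), (∀ n, IsClosed (f n)) ∧ U = ⋃ n, f n) →
      (∃ g : ℕ → Set (StSp B), (∀ n, IsClosed (g n)) ∧ V = ⋃ n, g n) →
      U ∩ V = ∅ → closure U ∩ closure V = ∅ := by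
  rintro U V hUo hVo ⟨f, hf, hUf⟩ ⟨g, hg, hVg⟩ hUV
  classical
  -- choice of basic neighborhoods
  have hchU : ∀ x : {x // x ∈ U}, ∃ a : B, (x : StSp B) ∈ Ba a ∧ Ba a ⊆ U :=
    fun x => exists_basic hUo x x.2
  have hchV : ∀ x : {x // x ∈ V}, ∃ a : B, (x : StSp B) ∈ Ba a ∧ Ba a ⊆ V :=
    fun x => exists_basic hVo x x.2
  choose aU haU haU' using hchU
  choose aV haV haV' using hchV
  -- finite subcovers of the closed pieces
  have hcovU : ∀ n, ∃ t : Finset {x // x ∈ U}, f n ⊆ ⋃ x ∈ t, Ba (aU x) := by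
    intro n
    have hfnU : f n ⊆ U := hUf ▸ Set.subset_iUnion f n
    have hcpt : IsCompact (f n) := (hf n).isCompact
    have hcov : f n ⊆ ⋃ x : {x // x ∈ U}, Ba (aU x) := fun y hy =>
      Set.mem_iUnion.mpr ⟨⟨y, hfnU hy⟩, haU _⟩
    exact hcpt.elim_finite_subcover _ (fun x => isOpen_Ba (aU x)) hcov
  have hcovV : ∀ n, ∃ t : Finset {x // x ∈ V}, g n ⊆ ⋃ x ∈ t, Ba (aV x) := by
    intro n
    have hgnV : g n ⊆ V := hVg ▸ Set.subset_iUnion g n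
    have hcpt : IsCompact (g n) := (hg n).isCompact
    have hcov : g n ⊆ ⋃ x : {x // x ∈ V}, Ba (aV x) := fun y hy =>
      Set.mem_iUnion.mpr ⟨⟨y, hgnV hy⟩, haV _⟩
    exact hcpt.elim_finite_subcover _ (fun x => isOpen_Ba (aV x)) hcov
  choose tU htU using hcovU
  choose tV htV using hcovV
  set A : Set B := ⋃ n, aU '' (tU n : Set {x // x ∈ U}) with hA
  set C : Set B := ⋃ n, aV '' (tV n : Set {x // x ∈ V}) with hC
  have hAc : A.Countable :=
    Set.countable_iUnion fun n => ((tU n).finite_toSet.image _).countable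
  have hCc : C.Countable :=
    Set.countable_iUnion fun n => ((tV n).finite_toSet.image _).countable
  have hAU : ∀ a ∈ A, Ba a ⊆ U := by
    rintro a ha
    obtain ⟨n, hn⟩ := Set.mem_iUnion.mp ha
    obtain ⟨x, -, rfl⟩ := hn
    exact haU' x
  have hCV : ∀ c ∈ C, Ba c ⊆ V := by
    rintro c hc
    obtain ⟨n, hn⟩ := Set.mem_iUnion.mp hc
    obtain ⟨x, -, rfl⟩ := hn
    exact haV' x
  have hdisj : ∀ a ∈ A, ∀ c ∈ C, a ⊓ c = ⊥ := by
    intro a ha c hc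
    apply eq_bot_of_Ba_empty
    rw [Ba_inf]
    rw [← Set.subset_empty_iff, ← hUV]
    exact Set.inter_subset_inter (hAU a ha) (hCV c hc)
  obtain ⟨d, hd1, hd2⟩ := hsep A C hAc hCc hdisj
  have hUBd : U ⊆ Ba d := by
    intro y hy
    obtain ⟨n, hn⟩ := Set.mem_iUnion.mp (hUf ▸ hy)
    obtain ⟨x, hx⟩ := Set.mem_iUnion.mp (htU n hn)
    obtain ⟨hxt, hyx⟩ := Set.mem_iUnion.mp hx
    have : aU x ∈ A := Set.mem_iUnion.mpr ⟨n, ⟨x, hxt, rfl⟩⟩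
    exact Ba_mono (hd1 _ this) hyx
  have hVBd : V ⊆ Ba dᶜ := by
    intro y hy
    obtain ⟨n, hn⟩ := Set.mem_iUnion.mp (hVg ▸ hy)
    obtain ⟨x, hx⟩ := Set.mem_iUnion.mp (htV n hn)
    obtain ⟨hxt, hyx⟩ := Set.mem_iUnion.mp hx
    have hmem : aV x ∈ C := Set.mem_iUnion.mpr ⟨n, ⟨x, hxt, rfl⟩⟩
    have : aV x ≤ dᶜ := le_compl_iff_disjoint_left.mpr (disjoint_iff.mpr (hd2 _ hmem))
    exact Ba_mono this hyx
  have h1 : closure U ⊆ Ba d := closure_minimal hUBd (isClosed_Ba d)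
  have h2 : closure V ⊆ Ba dᶜ := closure_minimal hVBd (isClosed_Ba dᶜ)
  rw [← Set.subset_empty_iff]
  calc closure U ∩ closure V ⊆ Ba d ∩ Ba dᶜ := Set.inter_subset_inter h1 h2
    _ = Ba (d ⊓ dᶜ) := (Ba_inf _ _).symm
    _ = ∅ := by rw [inf_compl_eq_bot, Ba_bot]
end
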